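/- arXiv:1302.4853 — 3 statements merged into one kernel-verified Lean document; each statement's English description precedes it below -/
import Mathlib

section
/- Let α : ℕ → ℕ be a nondecreasing positive function. Suppose building a binary tree requires, for each split of a node at depth d (creating two children at depth d+1), at least 2α(d+1) data points, disjointly across splits. Then among all tree shapes with K splits, the minimum total number of points required is achieved by a tree that is full at every level except possibly the last. -/
/-- A tree shape, identified with its finite, prefix-closed set of internal nodes
(paths of `Bool`s from the root). -/
def PrefixClosed (T : Finset (List Bool)) : Prop :=
  ∀ l ∈ T, ∀ p : List Bool, p <+: l → p ∈ T

/-- Cost of building a tree: splitting a node at depth `d` costs `2 * α (d+1)` points,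
disjointly across splits. -/
def treeCost (α : ℕ → ℕ) (T : Finset (List Bool)) : ℕ :=
  ∑ l ∈ T, 2 * α (l.length + 1)

/-- All Bool lists of length `n`. -/
def lists : ℕ → Finset (List Bool)
  | 0 => {[]}
  | n+1 => (lists n).image (List.cons true) ∪ (lists n).image (List.cons false)

lemma mem_lists (n : ℕ) (l : List Bool) : l ∈ lists n ↔ l.length = n := by
  induction n generalizing l with
  | zero => simp [lists, List.length_eq_zero_iff]
  | succ n ih =>
    cases l with
    | nil => simp [lists]
    | cons b t => cases b <;> simp [lists, ih]

lemma card_lists (n : ℕ) : (lists n).card = 2 ^ n := by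
  induction n with
  | zero => simp [lists]
  | succ n ih =>
    rw [lists, Finset.card_union_of_disjoint, Finset.card_image_of_injective _ List.cons_injective,
      Finset.card_image_of_injective _ List.cons_injective, ih]
    · ring
    · simp only [Finset.disjoint_left, Finset.mem_image]
      rintro x ⟨a, _, rfl⟩ ⟨b, _, h⟩
      simp at h

/-- All Bool lists of length `< n`. -/
def listsLt (n : ℕ) : Finset (List Bool) := (Finset.range n).biUnion lists

lemma mem_listsLt (n : ℕ) (l : List Bool) : l ∈ listsLt n ↔ l.length < n := by
  simp [listsLt, mem_lists]

lemma card_listsLt (n : ℕ) : (listsLt n).card = 2 ^ n - 1 := by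
  induction n with
  | zero => simp [listsLt]
  | succ n ih =>
    have h : listsLt (n+1) = listsLt n ∪ lists n := by
      ext l; simp only [mem_listsLt, Finset.mem_union, mem_lists]; omega
    rw [h, Finset.card_union_of_disjoint, ih, card_lists]
    · have : 1 ≤ 2 ^ n := Nat.one_le_two_pow
      have : 2 ^ (n+1) = 2 * 2 ^ n := by ring
      omega
    · simp only [Finset.disjoint_left, mem_listsLt, mem_lists]
      omega

lemma telescope (g : ℕ → ℕ) (hg : Monotone g) (n : ℕ) :
    ∑ d ∈ Finset.range n, (g (d+1) - g d) = g n - g 0 := by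
  induction n with
  | zero => simp
  | succ n ih =>
    rw [Finset.sum_range_succ, ih]
    have h1 : g 0 ≤ g n := hg (Nat.zero_le n)
    have h2 : g n ≤ g (n + 1) := hg (Nat.le_succ n)
    omega

lemma sum_formula (g : ℕ → ℕ) (hg : Monotone g) (S : Finset (List Bool)) (D : ℕ)
    (hD : ∀ l ∈ S, l.length ≤ D) :
    ∑ l ∈ S, g l.length
      = S.card * g 0 + ∑ d ∈ Finset.range D,
          (g (d+1) - g d) * (S.filter (fun l => d < l.length)).card := by
  have step : ∀ l ∈ S, g l.length
      = g 0 + ∑ d ∈ Finset.range D, (if d < l.length then g (d+1) - g d else 0) := by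
    intro l hl
    have hfil : (Finset.range D).filter (fun d => d < l.length) = Finset.range l.length := by
      ext d
      simp only [Finset.mem_filter, Finset.mem_range]
      have := hD l hl
      omega
    rw [← Finset.sum_filter, hfil, telescope g hg]
    have := hg (Nat.zero_le l.length)
    omega
  rw [Finset.sum_congr rfl step, Finset.sum_add_distrib, Finset.sum_const, Finset.sum_comm,
    smul_eq_mul]
  congr 1
  refine Finset.sum_congr rfl fun d _ => ?_
  rw [← Finset.sum_filter, Finset.sum_const, smul_eq_mul, mul_comm]

lemma cost_le (g : ℕ → ℕ) (hg : Monotone g) (S T : Finset (List Bool))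
    (hcard : S.card = T.card)
    (hcount : ∀ d, (T.filter (fun l => l.length ≤ d)).card
        ≤ (S.filter (fun l => l.length ≤ d)).card) :
    ∑ l ∈ S, g l.length ≤ ∑ l ∈ T, g l.length := by
  set D := max (S.sup List.length) (T.sup List.length) with hD
  have hS : ∀ l ∈ S, l.length ≤ D := fun l hl =>
    le_trans (Finset.le_sup hl) (le_max_left _ _)
  have hT : ∀ l ∈ T, l.length ≤ D := fun l hl =>
    le_trans (Finset.le_sup hl) (le_max_right _ _)
  rw [sum_formula g hg S D hS, sum_formula g hg T D hT, hcard]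
  refine Nat.add_le_add_left (Finset.sum_le_sum fun d _ => Nat.mul_le_mul_left _ ?_) _
  have hS' := Finset.card_filter_add_card_filter_not
    (s := S) (p := fun l => d < l.length)
  have hT' := Finset.card_filter_add_card_filter_not
    (s := T) (p := fun l => d < l.length)
  have eqS : S.filter (fun l => ¬ d < l.length) = S.filter (fun l => l.length ≤ d) := by
    apply Finset.filter_congr; intro x _; simp [not_lt]
  have eqT : T.filter (fun l => ¬ d < l.length) = T.filter (fun l => l.length ≤ d) := by
    apply Finset.filter_congr; intro x _; simp [not_lt]
  rw [eqS] at hS'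
  rw [eqT] at hT'
  have := hcount d
  omega

/-- For nondecreasing positive `α`, among all tree shapes with `K` splits
the minimum total cost is achieved by a tree that is full at every level except possibly
the last (i.e. containing every node strictly shallower than any of its nodes). -/
theorem stmt11 (α : ℕ → ℕ) (hmono : Monotone α) (hpos : ∀ d, 0 < α d) (K : ℕ) :
    ∃ T₀ : Finset (List Bool), PrefixClosed T₀ ∧ T₀.card = K ∧
      (∀ l ∈ T₀, ∀ l' : List Bool, l'.length < l.length → l' ∈ T₀) ∧
      ∀ T : Finset (List Bool), PrefixClosed T → T.card = K →
        treeCost α T₀ ≤ treeCost α T := by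
  set L := Nat.log 2 (K + 1) with hLdef
  have h1 : 2 ^ L ≤ K + 1 := Nat.pow_log_le_self 2 (Nat.succ_ne_zero K)
  have h2 : K + 1 < 2 ^ (L + 1) := Nat.lt_pow_succ_log_self one_lt_two _
  have hpow : 2 ^ (L + 1) = 2 * 2 ^ L := by ring
  have hKL : 2 ^ L - 1 ≤ K := by omega
  have hB : K - (2 ^ L - 1) ≤ (lists L).card := by
    rw [card_lists]; omega
  obtain ⟨B, hBsub, hBcard⟩ := Finset.exists_subset_card_eq hB
  set T₀ : Finset (List Bool) := listsLt L ∪ B with hT₀def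
  have hmem : ∀ l ∈ T₀, l.length ≤ L := by
    intro l hl
    rcases Finset.mem_union.mp hl with h | h
    · exact le_of_lt ((mem_listsLt L l).mp h)
    · exact le_of_eq ((mem_lists L l).mp (hBsub h))
  have hdisj : Disjoint (listsLt L) B := by
    rw [Finset.disjoint_left]
    intro x hx hxB
    have := (mem_listsLt L x).mp hx
    have := (mem_lists L x).mp (hBsub hxB)
    omega
  have hfull : ∀ l ∈ T₀, ∀ l' : List Bool, l'.length < l.length → l' ∈ T₀ := by
    intro l hl l' hl'
    apply Finset.mem_union_left
    rw [mem_listsLt]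
    have := hmem l hl
    omega
  refine ⟨T₀, ?_, ?_, hfull, ?_⟩
  · -- prefix-closed
    intro l hl p hp
    by_cases hpl : p = l
    · exact hpl ▸ hl
    · have hlt : p.length < l.length := by
        have hle := hp.length_le
        rcases Nat.lt_or_ge p.length l.length with h | h
        · exact h
        · exact absurd (List.IsPrefix.eq_of_length hp (by omega)) hpl
      exact hfull l hl p hlt
  · rw [Finset.card_union_of_disjoint hdisj, card_listsLt, hBcard]
    omega
  · -- minimality
    intro T _ hTcard
    have hg : Monotone (fun n => 2 * α (n + 1)) := by
      intro a b h
      exact Nat.mul_le_mul_left 2 (hmono (by omega))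
    have hcard0 : T₀.card = K := by
      rw [Finset.card_union_of_disjoint hdisj, card_listsLt, hBcard]; omega
    have hcount : ∀ d, (T.filter (fun l => l.length ≤ d)).card
        ≤ (T₀.filter (fun l => l.length ≤ d)).card := by
      intro d
      rcases Nat.lt_or_ge d L with hdL | hdL
      · -- d < L : everything of length ≤ d is in T₀
        have hsub1 : T.filter (fun l => l.length ≤ d) ⊆ listsLt (d+1) := by
          intro x hx
          rw [mem_listsLt]
          have := (Finset.mem_filter.mp hx).2
          omega
        have hsub2 : listsLt (d+1) ⊆ T₀.filter (fun l => l.length ≤ d) := by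
          intro x hx
          have hxlen := (mem_listsLt (d+1) x).mp hx
          refine Finset.mem_filter.mpr ⟨Finset.mem_union_left _ ?_, by omega⟩
          rw [mem_listsLt]; omega
        exact le_trans (Finset.card_le_card hsub1) (Finset.card_le_card hsub2)
      · -- L ≤ d : T₀ is entirely of length ≤ d
        have hfil : T₀.filter (fun l => l.length ≤ d) = T₀ := by
          apply Finset.filter_true_of_mem
          intro x hx
          have := hmem x hx
          omega
        rw [hfil, hcard0]
        calc (T.filter (fun l => l.length ≤ d)).card ≤ T.card := Finset.card_filter_le _ _
          _ = K := hTcard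
    exact cost_le (fun n => 2 * α (n + 1)) hg T₀ T (by rw [hcard0, hTcard]) hcount
end

section
/- Let α : ℕ → ℕ be a nondecreasing positive function and define N_d = Σ_{k=1}^d 2^k α(k). If a binary tree built under the cost model (each split of a depth-(d) node costs at least 2α(d+1) points, costs disjoint) has been built from at most N total points, then for every d ≥ 0 the number of splits K satisfies K ≤ N/(2α(d+1)) + C(d), where C(d) = 2^d − 1 − (1/2)Σ_{k=1}^d 2^k α(k)/α(d+1). -/
/-- There are at most `2^k` nodes at depth `k`. -/
lemma card_len_le (T : Finset (List Bool)) (k : ℕ) :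
    (T.filter (fun l => l.length = k)).card ≤ 2 ^ k := by
  classical
  have h : (T.filter (fun l => l.length = k)).card ≤ Fintype.card (Fin k → Bool) := by
    apply Finset.card_le_card_of_injOn (fun l (i : Fin k) => l.getD i false)
      (fun _ _ => Finset.mem_univ _)
    intro a ha b hb hab
    simp only [Finset.coe_filter, Set.mem_setOf_eq] at ha hb
    apply List.ext_getElem (ha.2.trans hb.2.symm)
    intro i hi hi'
    have h1 := congrFun hab ⟨i, ha.2 ▸ hi⟩
    simp only at h1
    rwa [List.getD_eq_getElem a false hi, List.getD_eq_getElem b false hi'] at h1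
  simpa using h

/-- If a tree has been built from at most `N` points under the cost model,
then for every `d` the number of splits `K` satisfies
`K ≤ N/(2α(d+1)) + C(d)` with `C(d) = 2^d − 1 − (1/2)∑_{k=1}^d 2^k α(k)/α(d+1)`. -/
theorem stmt12 (α : ℕ → ℕ) (hmono : Monotone α) (hpos : ∀ d, 0 < α d) (N : ℕ)
    (T : Finset (List Bool)) (hpc : PrefixClosed T) (hcost : treeCost α T ≤ N) (d : ℕ) :
    (T.card : ℝ) ≤ N / (2 * α (d + 1))
      + (2 ^ d - 1 - 1 / 2 * ∑ k ∈ Finset.Icc 1 d, 2 ^ k * (α k : ℝ) / α (d + 1)) := by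
  classical
  set A : ℝ := (α (d + 1) : ℝ) with hAdef
  have hA : (0 : ℝ) < A := by rw [hAdef]; exact_mod_cast hpos (d + 1)
  -- fiberwise bound at depths below d
  have hfiber : ∀ k ∈ Finset.range d,
      ∑ l ∈ T.filter (fun l => l.length = k), (2 * A - 2 * (α (l.length + 1) : ℝ))
        ≤ 2 ^ k * (2 * A - 2 * (α (k + 1) : ℝ)) := by
    intro k hk
    have hk' : k < d := Finset.mem_range.mp hk
    have hterm : (0 : ℝ) ≤ 2 * A - 2 * (α (k + 1) : ℝ) := by
      have h1 : (α (k + 1) : ℝ) ≤ A := by rw [hAdef]; exact_mod_cast hmono (by omega : k + 1 ≤ d + 1)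
      linarith
    have hcongr : ∀ l ∈ T.filter (fun l => l.length = k),
        (2 * A - 2 * (α (l.length + 1) : ℝ)) = 2 * A - 2 * (α (k + 1) : ℝ) := by
      intro l hl
      have := (Finset.mem_filter.mp hl).2
      rw [this]
    rw [Finset.sum_congr rfl hcongr, Finset.sum_const, nsmul_eq_mul]
    have hc : ((T.filter (fun l => l.length = k)).card : ℝ) ≤ 2 ^ k := by
      exact_mod_cast card_len_le T k
    exact mul_le_mul_of_nonneg_right hc hterm
  -- drop deep nodes (nonpositive terms) and regroup by depth
  have hsplit : ∑ l ∈ T, (2 * A - 2 * (α (l.length + 1) : ℝ))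
      ≤ ∑ k ∈ Finset.range d, 2 ^ k * (2 * A - 2 * (α (k + 1) : ℝ)) := by
    have h1 : ∑ l ∈ T, (2 * A - 2 * (α (l.length + 1) : ℝ))
        ≤ ∑ l ∈ T.filter (fun l => l.length < d), (2 * A - 2 * (α (l.length + 1) : ℝ)) := by
      rw [← Finset.sum_filter_add_sum_filter_not T (fun l => l.length < d)]
      have h2 : ∑ l ∈ T.filter (fun l => ¬ l.length < d),
          (2 * A - 2 * (α (l.length + 1) : ℝ)) ≤ 0 := by
        apply Finset.sum_nonpos
        intro l hl
        have hld : ¬ l.length < d := (Finset.mem_filter.mp hl).2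
        have h3 : A ≤ (α (l.length + 1) : ℝ) := by
          rw [hAdef]
          exact_mod_cast hmono (by omega : d + 1 ≤ l.length + 1)
        linarith
      linarith
    have h2 : ∑ l ∈ T.filter (fun l => l.length < d), (2 * A - 2 * (α (l.length + 1) : ℝ))
        = ∑ k ∈ Finset.range d, ∑ l ∈ (T.filter (fun l => l.length < d)).filter
            (fun l => l.length = k), (2 * A - 2 * (α (l.length + 1) : ℝ)) := by
      rw [Finset.sum_fiberwise_of_maps_to]
      intro l hl
      exact Finset.mem_range.mpr ((Finset.mem_filter.mp hl).2)
    have h3 : ∀ k ∈ Finset.range d,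
        (T.filter (fun l => l.length < d)).filter (fun l => l.length = k)
          = T.filter (fun l => l.length = k) := by
      intro k hk
      have hk' : k < d := Finset.mem_range.mp hk
      rw [Finset.filter_filter]
      apply Finset.filter_congr
      intro l _
      constructor
      · rintro ⟨_, h⟩; exact h
      · intro h; exact ⟨by omega, h⟩
    calc ∑ l ∈ T, (2 * A - 2 * (α (l.length + 1) : ℝ))
        ≤ ∑ l ∈ T.filter (fun l => l.length < d), (2 * A - 2 * (α (l.length + 1) : ℝ)) := h1
      _ = ∑ k ∈ Finset.range d, ∑ l ∈ (T.filter (fun l => l.length < d)).filter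
            (fun l => l.length = k), (2 * A - 2 * (α (l.length + 1) : ℝ)) := h2
      _ = ∑ k ∈ Finset.range d, ∑ l ∈ T.filter (fun l => l.length = k),
            (2 * A - 2 * (α (l.length + 1) : ℝ)) := by
          apply Finset.sum_congr rfl
          intro k hk
          rw [h3 k hk]
      _ ≤ ∑ k ∈ Finset.range d, 2 ^ k * (2 * A - 2 * (α (k + 1) : ℝ)) :=
          Finset.sum_le_sum hfiber
  -- cast the cost
  have hcast : (treeCost α T : ℝ) = ∑ l ∈ T, 2 * (α (l.length + 1) : ℝ) := by
    unfold treeCost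
    push_cast
    rfl
  have hcostR : ∑ l ∈ T, 2 * (α (l.length + 1) : ℝ) ≤ N := by
    rw [← hcast]; exact_mod_cast hcost
  -- evaluate the RHS sum
  have hS : ∑ k ∈ Finset.Icc 1 d, (2 : ℝ) ^ k * (α k : ℝ)
      = ∑ k ∈ Finset.range d, 2 ^ (k + 1) * (α (k + 1) : ℝ) := by
    rw [← Finset.Ico_add_one_right_eq_Icc, Finset.sum_Ico_eq_sum_range]
    apply Finset.sum_congr rfl
    intro k _
    rw [Nat.add_comm 1 k]
  have hgeom : ∑ k ∈ Finset.range d, (2 : ℝ) ^ k = 2 ^ d - 1 := by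
    have := geom_sum_eq (by norm_num : (2 : ℝ) ≠ 1) d
    linarith [this]
  have e3 : ∑ k ∈ Finset.range d, (2 : ℝ) ^ k * (2 * A - 2 * (α (k + 1) : ℝ))
      = 2 * A * (2 ^ d - 1) - ∑ k ∈ Finset.Icc 1 d, (2 : ℝ) ^ k * (α k : ℝ) := by
    calc ∑ k ∈ Finset.range d, (2 : ℝ) ^ k * (2 * A - 2 * (α (k + 1) : ℝ))
        = ∑ k ∈ Finset.range d, (2 * A * 2 ^ k - 2 ^ (k + 1) * (α (k + 1) : ℝ)) := by
          apply Finset.sum_congr rfl; intro k _; ring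
      _ = 2 * A * ∑ k ∈ Finset.range d, (2 : ℝ) ^ k
            - ∑ k ∈ Finset.range d, 2 ^ (k + 1) * (α (k + 1) : ℝ) := by
          rw [Finset.sum_sub_distrib, Finset.mul_sum]
      _ = 2 * A * (2 ^ d - 1) - ∑ k ∈ Finset.Icc 1 d, (2 : ℝ) ^ k * (α k : ℝ) := by
          rw [hgeom, hS]
  -- the key linear inequality
  have e1 : (T.card : ℝ) * (2 * A) = ∑ _l ∈ T, (2 * A) := by
    rw [Finset.sum_const, nsmul_eq_mul]
  have e2 : ∑ _l ∈ T, (2 * A)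
      = ∑ l ∈ T, 2 * (α (l.length + 1) : ℝ)
        + ∑ l ∈ T, (2 * A - 2 * (α (l.length + 1) : ℝ)) := by
    rw [← Finset.sum_add_distrib]
    apply Finset.sum_congr rfl
    intro l _
    ring
  have hkey : (T.card : ℝ) * (2 * A)
      ≤ N + (2 * A * (2 ^ d - 1) - ∑ k ∈ Finset.Icc 1 d, (2 : ℝ) ^ k * (α k : ℝ)) := by
    rw [e1, e2]
    rw [e3] at hsplit
    linarith
  -- finish
  rw [← Finset.sum_div]
  have hRHS : (N : ℝ) / (2 * A)
      + ((2:ℝ) ^ d - 1 - 1 / 2 * ((∑ k ∈ Finset.Icc 1 d, (2:ℝ) ^ k * (α k : ℝ)) / A))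
      = (N + (2 * A * (2 ^ d - 1) - ∑ k ∈ Finset.Icc 1 d, (2 : ℝ) ^ k * (α k : ℝ)))
          / (2 * A) := by
    field_simp
  rw [hRHS, le_div_iff₀ (by positivity)]
  linarith
end

section
/- Let A ⊆ ℝ^D be a cell with X-measure μ(A), and suppose each split of a cell is made along one of at most Dm candidate cut points, where each candidate cut in a given dimension is at an independent Uniform location within that dimension's extent of the cell (rescaled). If A' is a child of A produced by one split, then E[μ(A') | μ(A)] ≤ μ(A)·(2Dm+1)/(2Dm+2), assuming μ restricted to the cell is the uniform-like worst case where each child's measure fraction is bounded by the max over candidates of max(U_i, 1−U_i) with {U_i}_{i=1}^{Dm} i.i.d. Uniform[0,1]. Consequently, if A^K is any cell obtained from A by K successive splits, E[μ(A^K)] ≤ μ(A)·((2Dm+1)/(2Dm+2))^K. -/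
/-! If `U` is uniform on `[0, 1]` then `ℙ(max(U, 1 - U) ≤ t) = |[1 - t, t] ∩ [0, 1]|`, so for
independent `U_1, …, U_n` the retained fraction `W = maxᵢ max(Uᵢ, 1 - Uᵢ)` has
`ℙ(W ≤ t) = (2t - 1)ⁿ` on `[1/2, 1]`, and the layer-cake formula gives
`E[W] = 1/2 + ∫_{1/2}^1 (1 - (2t - 1)ⁿ) dt = (2n + 1)/(2n + 2)`.
Since `M_{K+1} ≤ M_K W_K` with `W_K` independent of `M_K`, `E[M_{K+1}] ≤ E[M_K] E[W_K]`,
and the bound follows by induction on `K`. -/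

open MeasureTheory ProbabilityTheory Set

/-- `ℙ(max(U, 1 - U) ≤ t)` for `U` uniform on `[0, 1]`: the length of `[1 - t, t] ∩ [0, 1]`. -/
def foldedUniformCDF (t : ℝ) : ℝ := max (min t 1 - max (1 - t) 0) 0

lemma foldedUniformCDF_of_le_half {t : ℝ} (ht : t ≤ 1 / 2) : foldedUniformCDF t = 0 := by
  rw [foldedUniformCDF, min_eq_left (by linarith : t ≤ 1), max_eq_left (by linarith : 0 ≤ 1 - t)]
  exact max_eq_right (by linarith)

lemma foldedUniformCDF_of_half_le_of_le_one {t : ℝ} (ht : 1 / 2 ≤ t) (ht' : t ≤ 1) :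
    foldedUniformCDF t = 2 * t - 1 := by
  rw [foldedUniformCDF, min_eq_left ht', max_eq_left (by linarith : 0 ≤ 1 - t),
    max_eq_left (by linarith)]
  ring

lemma foldedUniformCDF_of_one_le {t : ℝ} (ht : 1 ≤ t) : foldedUniformCDF t = 1 := by
  rw [foldedUniformCDF, min_eq_right ht, max_eq_right (by linarith : 1 - t ≤ 0)]
  norm_num

lemma continuous_foldedUniformCDF : Continuous foldedUniformCDF := by
  unfold foldedUniformCDF
  fun_prop

lemma integral_pow_two_mul_sub_one (n : ℕ) :
    ∫ t in (1 / 2 : ℝ)..1, (2 * t - 1) ^ n = 1 / (2 * (n + 1)) := by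
  rw [intervalIntegral.integral_comp_mul_sub (fun x => x ^ n) two_ne_zero, integral_pow]
  norm_num
  field_simp

lemma integral_Ioi_one_sub_foldedUniformCDF_pow {n : ℕ} (hn : 0 < n) :
    ∫ t in Ioi (0 : ℝ), (1 - foldedUniformCDF t ^ n) = (2 * n + 1) / (2 * n + 2) := by
  set f : ℝ → ℝ := fun t => 1 - foldedUniformCDF t ^ n
  have hf : Continuous f := continuous_const.sub (continuous_foldedUniformCDF.pow n)
  have htail : EqOn f 0 (Ioi 1) := fun t ht => by
    simp [f, foldedUniformCDF_of_one_le (le_of_lt ht)]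
  have hlow : EqOn f (fun _ => 1) (uIcc 0 (1 / 2)) := fun t ht => by
    rw [uIcc_of_le (by norm_num)] at ht
    simp [f, foldedUniformCDF_of_le_half ht.2, hn.ne']
  have hhigh : EqOn f (fun t => 1 - (2 * t - 1) ^ n) (uIcc (1 / 2) 1) := fun t ht => by
    rw [uIcc_of_le (by norm_num)] at ht
    simp [f, foldedUniformCDF_of_half_le_of_le_one ht.1 ht.2]
  calc ∫ t in Ioi 0, f t
      = (∫ t in Ioc 0 1, f t) + ∫ t in Ioi 1, f t := by
        rw [← setIntegral_union (Ioc_disjoint_Ioi le_rfl) measurableSet_Ioi hf.integrableOn_Ioc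
          ((integrableOn_congr_fun htail measurableSet_Ioi).mpr integrableOn_zero),
          Ioc_union_Ioi_eq_Ioi zero_le_one]
    _ = (∫ t in (0)..(1 / 2), f t) + ∫ t in (1 / 2)..1, f t := by
        rw [setIntegral_congr_fun measurableSet_Ioi htail,
          ← intervalIntegral.integral_of_le zero_le_one,
          intervalIntegral.integral_add_adjacent_intervals (hf.intervalIntegrable _ _)
            (hf.intervalIntegrable _ _)]
        simp
    _ = 1 / 2 + (1 / 2 - 1 / (2 * (n + 1))) := by
        rw [intervalIntegral.integral_congr hlow, intervalIntegral.integral_congr hhigh,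
          intervalIntegral.integral_sub intervalIntegrable_const
            ((by fun_prop : Continuous fun t : ℝ => (2 * t - 1) ^ n).intervalIntegrable _ _),
          integral_pow_two_mul_sub_one]
        norm_num
    _ = (2 * n + 1) / (2 * n + 2) := by
        field_simp
        ring

lemma sup'_max_one_sub_nonneg {ι : Type*} {s : Finset ι} (hs : s.Nonempty) (x : ι → ℝ) :
    0 ≤ s.sup' hs fun i => max (x i) (1 - x i) := by
  obtain ⟨i, hi⟩ := id hs
  have := le_max_left (x i) (1 - x i)
  have := le_max_right (x i) (1 - x i)
  exact Finset.le_sup'_of_le _ hi (by linarith)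

section FoldedMax

variable {Ω : Type*} [MeasurableSpace Ω] {P : Measure Ω}

lemma measure_preimage_Icc_of_map_eq_uniform {V : Ω → ℝ} (hV : Measurable V)
    (hunif : P.map V = volume.restrict (Icc 0 1)) (a b : ℝ) :
    P (V ⁻¹' Icc a b) = ENNReal.ofReal (min b 1 - max a 0) := by
  rw [← Measure.map_apply hV measurableSet_Icc, hunif, Measure.restrict_apply measurableSet_Icc,
    Icc_inter_Icc, Real.volume_Icc]

lemma ae_mem_Icc_of_map_eq_uniform {V : Ω → ℝ} (hV : Measurable V)
    (hunif : P.map V = volume.restrict (Icc 0 1)) : ∀ᵐ ω ∂P, V ω ∈ Icc (0 : ℝ) 1 :=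
  ae_of_ae_map hV.aemeasurable (hunif ▸ ae_restrict_mem measurableSet_Icc)

variable {ι : Type*} [Fintype ι] {V : ι → Ω → ℝ} (hne : (Finset.univ : Finset ι).Nonempty)

lemma measurable_sup'_max_one_sub (hV : ∀ i, Measurable (V i)) :
    Measurable fun ω => Finset.univ.sup' hne fun i => max (V i ω) (1 - V i ω) := by
  convert Finset.measurable_sup' hne (f := fun i ω => max (V i ω) (1 - V i ω))
    fun i _ => (hV i).max (measurable_const.sub (hV i)) using 1
  ext ω
  rw [Finset.sup'_apply]

lemma integrable_sup'_max_one_sub [IsFiniteMeasure P] (hV : ∀ i, Measurable (V i))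
    (hunif : ∀ i, P.map (V i) = volume.restrict (Icc 0 1)) :
    Integrable (fun ω => Finset.univ.sup' hne fun i => max (V i ω) (1 - V i ω)) P := by
  refine Integrable.of_bound (measurable_sup'_max_one_sub hne hV).aestronglyMeasurable 1 ?_
  filter_upwards [ae_all_iff.mpr fun i => ae_mem_Icc_of_map_eq_uniform (hV i) (hunif i)]
    with ω hω
  rw [Real.norm_eq_abs, abs_of_nonneg (sup'_max_one_sub_nonneg hne _)]
  exact Finset.sup'_le _ _ fun i _ => max_le (hω i).2 (by linarith [(hω i).1])

lemma measureReal_sup'_max_one_sub_le (hV : ∀ i, Measurable (V i))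
    (hunif : ∀ i, P.map (V i) = volume.restrict (Icc 0 1)) (hindep : iIndepFun V P) (t : ℝ) :
    P.real {ω | (Finset.univ.sup' hne fun i => max (V i ω) (1 - V i ω)) ≤ t}
      = foldedUniformCDF t ^ Fintype.card ι := by
  have hset : {ω | (Finset.univ.sup' hne fun i => max (V i ω) (1 - V i ω)) ≤ t}
      = ⋂ i, V i ⁻¹' Icc (1 - t) t := by
    ext ω
    simp only [mem_ofPred_eq, Finset.sup'_le_iff, Finset.mem_univ, true_implies, max_le_iff,
      mem_iInter, mem_preimage, mem_Icc]
    exact forall_congr' fun i =>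
      ⟨fun h => ⟨by linarith [h.2], h.1⟩, fun h => ⟨h.2, by linarith [h.1]⟩⟩
  rw [measureReal_def, hset, hindep.meas_iInter fun i => ⟨_, measurableSet_Icc, rfl⟩]
  simp only [measure_preimage_Icc_of_map_eq_uniform (hV _) (hunif _), Finset.prod_const,
    Finset.card_univ, ENNReal.toReal_pow, ENNReal.toReal_ofReal', foldedUniformCDF]

lemma integral_sup'_max_one_sub [IsProbabilityMeasure P] (hV : ∀ i, Measurable (V i))
    (hunif : ∀ i, P.map (V i) = volume.restrict (Icc 0 1)) (hindep : iIndepFun V P) :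
    ∫ ω, (Finset.univ.sup' hne fun i => max (V i ω) (1 - V i ω)) ∂P
      = (2 * Fintype.card ι + 1) / (2 * Fintype.card ι + 2) := by
  set W := fun ω => Finset.univ.sup' hne fun i => max (V i ω) (1 - V i ω)
  have htail (t : ℝ) : P.real {ω | t < W ω} = 1 - foldedUniformCDF t ^ Fintype.card ι := by
    have hcompl : {ω | t < W ω} = {ω | W ω ≤ t}ᶜ := by ext; simp
    have hmeas : MeasurableSet {ω | W ω ≤ t} :=
      measurable_sup'_max_one_sub hne hV measurableSet_Iic
    rw [hcompl, probReal_compl_eq_one_sub hmeas,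
      measureReal_sup'_max_one_sub_le hne hV hunif hindep]
  rw [(integrable_sup'_max_one_sub hne hV hunif).integral_eq_integral_meas_lt
      (ae_of_all _ fun ω => sup'_max_one_sub_nonneg hne fun i => V i ω),
    setIntegral_congr_fun measurableSet_Ioi fun t _ => htail t,
    integral_Ioi_one_sub_foldedUniformCDF_pow (Fintype.card_pos_iff.mpr ⟨hne.choose⟩)]

end FoldedMax

lemma integral_le_mul_pow_of_le_mul_of_indepFun {Ω : Type*} [MeasurableSpace Ω] {P : Measure Ω}
    {M W : ℕ → Ω → ℝ} {c r : ℝ} (hr : 0 ≤ r) (hM0 : ∫ ω, M 0 ω ∂P ≤ c)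
    (hMint : ∀ K, Integrable (M K) P) (hWint : ∀ K, Integrable (W K) P)
    (hEW : ∀ K, ∫ ω, W K ω ∂P = r) (hindep : ∀ K, IndepFun (M K) (W K) P)
    (hstep : ∀ K, M (K + 1) ≤ᵐ[P] M K * W K) (K : ℕ) :
    ∫ ω, M K ω ∂P ≤ c * r ^ K := by
  induction K with
  | zero => simpa using hM0
  | succ K ih =>
    calc ∫ ω, M (K + 1) ω ∂P
        ≤ ∫ ω, (M K * W K) ω ∂P :=
          integral_mono_ae (hMint _) ((hindep K).integrable_mul (hMint K) (hWint K)) (hstep K)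
      _ = (∫ ω, M K ω ∂P) * r := by
          rw [(hindep K).integral_mul_eq_mul_integral (hMint K).aestronglyMeasurable
            (hWint K).aestronglyMeasurable, hEW]
      _ ≤ c * r ^ K * r := mul_le_mul_of_nonneg_right ih hr
      _ = c * r ^ (K + 1) := by ring

theorem stmt14_general {Ω : Type*} [MeasureSpace Ω] [IsProbabilityMeasure (ℙ : Measure Ω)]
    (D m : ℕ) (hDm : 0 < D * m) (μA : ℝ)
    (U : ℕ → Fin (D * m) → Ω → ℝ) (hUmeas : ∀ K i, Measurable (U K i))
    (hunif : ∀ K i, Measure.map (U K i) ℙ = volume.restrict (Set.Icc (0 : ℝ) 1))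
    (hUindep : iIndepFun
      (fun p : ℕ × Fin (D * m) => U p.1 p.2) ℙ)
    (M : ℕ → Ω → ℝ) (hM0 : ∀ ω, M 0 ω = μA)
    (hMint : ∀ K, Integrable (M K) ℙ)
    (W : ℕ → Ω → ℝ)
    (hW : ∀ K ω, W K ω = Finset.univ.sup' ⟨⟨0, hDm⟩, Finset.mem_univ _⟩
      fun i => max (U K i ω) (1 - U K i ω))
    (hindepMW : ∀ K, IndepFun (M K) (W K) ℙ)
    (hstep : ∀ K ω, M (K + 1) ω ≤ M K ω * W K ω)
    (K : ℕ) :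
    ∫ ω, M K ω ∂ℙ ≤ μA * ((2 * (D * m : ℝ) + 1) / (2 * (D * m : ℝ) + 2)) ^ K := by
  have hrow (k : ℕ) : iIndepFun (U k) ℙ :=
    hUindep.precomp (g := fun i => (k, i)) (Prod.mk_right_injective k)
  have hWk (k : ℕ) : W k = fun ω => Finset.univ.sup' _ fun i => max (U k i ω) (1 - U k i ω) :=
    funext (hW k)
  refine integral_le_mul_pow_of_le_mul_of_indepFun (by positivity) (by simp [hM0]) hMint
    (fun k => hWk k ▸ integrable_sup'_max_one_sub _ (hUmeas k) (hunif k)) (fun k => ?_) hindepMW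
    (fun k => ae_of_all _ (hstep k)) K
  simpa only [hW, Fintype.card_fin, Nat.cast_mul]
    using integral_sup'_max_one_sub _ (hUmeas k) (hunif k) (hrow k)

/-- Let `M K` be the measure of the cell obtained from `A` after `K`
splits (`M 0 = μ(A)`).  Each split retains at most the fraction
`W K = max_{i < Dm} max(U_i, 1 − U_i)` of the mass, where the `U`'s are i.i.d.
Uniform[0,1] and `W K` is independent of `M K`.  Then
`E[M K] ≤ μ(A) · ((2Dm+1)/(2Dm+2))^K`. -/
theorem stmt14 {Ω : Type*} [MeasureSpace Ω] [IsProbabilityMeasure (ℙ : Measure Ω)]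
    (D m : ℕ) (hDm : 0 < D * m) (μA : ℝ) (hμA : 0 ≤ μA)
    (U : ℕ → Fin (D * m) → Ω → ℝ) (hUmeas : ∀ K i, Measurable (U K i))
    (hunif : ∀ K i, Measure.map (U K i) ℙ = volume.restrict (Set.Icc (0 : ℝ) 1))
    (hUindep : iIndepFun
      (fun p : ℕ × Fin (D * m) => U p.1 p.2) ℙ)
    (M : ℕ → Ω → ℝ) (hM0 : ∀ ω, M 0 ω = μA) (hMpos : ∀ K ω, 0 ≤ M K ω)
    (hMmeas : ∀ K, Measurable (M K)) (hMint : ∀ K, Integrable (M K) ℙ)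
    (W : ℕ → Ω → ℝ)
    (hW : ∀ K ω, W K ω = Finset.univ.sup' ⟨⟨0, hDm⟩, Finset.mem_univ _⟩
      fun i => max (U K i ω) (1 - U K i ω))
    (hindepMW : ∀ K, IndepFun (M K) (W K) ℙ)
    (hMWint : ∀ K, Integrable (fun ω => M K ω * W K ω) ℙ)
    (hstep : ∀ K ω, M (K + 1) ω ≤ M K ω * W K ω)
    (K : ℕ) :
    ∫ ω, M K ω ∂ℙ ≤ μA * ((2 * (D * m : ℝ) + 1) / (2 * (D * m : ℝ) + 2)) ^ K :=
  stmt14_general D m hDm μA U hUmeas hunif hUindep M hM0 hMint W hW hindepMW hstep K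
end
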